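/- Let N ≥ 3, β ≤ 1 and 2 ≤ γ₁ < γ₂. Then A_{β,γ₁} ⊆ A_{β,γ₂}, where A_{β,γ} ⊆ ℝ² is the region defined piecewise by: A_{β,γ} = {(α,q) : max{1,2β} < q < min{q_*, q_**}} if 2 ≤ γ < N; = {(α,q) : max{1,2β} < q < q_**, α > −(1−β)N} if γ = N; = {(α,q) : max{1,2β,q_*} < q < q_**} if N < γ < 2N−2; = {(α,q) : max{1,2β,q_*} < q, α > −(1−β)γ} if γ = 2N−2; = {(α,q) : max{1,2β,q_*,q_**} < q} if γ > 2N−2, with q_* = q_*(α,β,γ) = 2(α−γβ+N)/(N−γ) and q_** = q_**(α,β,γ) = 2(2α+(1−2β)γ+2(N−1))/(2(N−1)−γ). -/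

import Mathlib

noncomputable def qlow (N α β γ : ℝ) : ℝ := 2 * (α - γ * β + N) / (N - γ)

noncomputable def qupp (N α β γ : ℝ) : ℝ :=
  2 * (2 * α + (1 - 2 * β) * γ + 2 * (N - 1)) / (2 * (N - 1) - γ)

/-- The region `A_{β,γ}` of the `αq`-plane, defined piecewise according to `γ`. -/
def Aregion (N β γ : ℝ) : Set (ℝ × ℝ) :=
  {p : ℝ × ℝ |
    (2 ≤ γ ∧ γ < N ∧ max 1 (2 * β) < p.2 ∧
      p.2 < min (qlow N p.1 β γ) (qupp N p.1 β γ)) ∨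
    (γ = N ∧ max 1 (2 * β) < p.2 ∧ p.2 < qupp N p.1 β γ ∧ p.1 > -(1 - β) * N) ∨
    (N < γ ∧ γ < 2 * N - 2 ∧ max (max 1 (2 * β)) (qlow N p.1 β γ) < p.2 ∧
      p.2 < qupp N p.1 β γ) ∨
    (γ = 2 * N - 2 ∧ max (max 1 (2 * β)) (qlow N p.1 β γ) < p.2 ∧
      p.1 > -(1 - β) * γ) ∨
    (γ > 2 * N - 2 ∧
      max (max (max 1 (2 * β)) (qlow N p.1 β γ)) (qupp N p.1 β γ) < p.2)}

/-!
Clearing denominators, each of the five cases of `A_{β,γ}` says the same thing: `max 1 (2β) < q`,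
`(N - γ) q < 2 (α - γβ + N)` and `(2(N - 1) - γ) q < 2 (2α + (1 - 2β)γ + 2(N - 1))`; the cases
`γ = N` and `γ = 2N - 2` are those where a denominator vanishes and the constraint becomes a bound
on `α`. In both constraints, left minus right side is affine in `γ` with slope `2β - q`,
resp. `4β - 2 - q`, which is negative once `2β < q` and `β ≤ 1`, so the region grows with `γ`.
-/

section Thresholds

variable {N α β γ q : ℝ}

lemma lt_qlow_iff (hγ : γ < N) : q < qlow N α β γ ↔ (N - γ) * q < 2 * (α - γ * β + N) := by
  rw [qlow, lt_div_iff₀ (sub_pos.2 hγ), mul_comm]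

lemma qlow_lt_iff (hγ : N < γ) : qlow N α β γ < q ↔ (N - γ) * q < 2 * (α - γ * β + N) := by
  rw [qlow, div_lt_iff_of_neg (sub_neg.2 hγ), mul_comm]

lemma lt_qupp_iff (hγ : γ < 2 * N - 2) :
    q < qupp N α β γ ↔ (2 * (N - 1) - γ) * q < 2 * (2 * α + (1 - 2 * β) * γ + 2 * (N - 1)) := by
  rw [qupp, lt_div_iff₀ (by linarith), mul_comm]

lemma qupp_lt_iff (hγ : 2 * N - 2 < γ) :
    qupp N α β γ < q ↔ (2 * (N - 1) - γ) * q < 2 * (2 * α + (1 - 2 * β) * γ + 2 * (N - 1)) := by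
  rw [qupp, div_lt_iff_of_neg (by linarith), mul_comm]

end Thresholds

lemma mem_Aregion_iff {N β γ : ℝ} (hN : 3 ≤ N) (hγ : 2 ≤ γ) {p : ℝ × ℝ} :
    p ∈ Aregion N β γ ↔
      max 1 (2 * β) < p.2 ∧
      (N - γ) * p.2 < 2 * (p.1 - γ * β + N) ∧
      (2 * (N - 1) - γ) * p.2 < 2 * (2 * p.1 + (1 - 2 * β) * γ + 2 * (N - 1)) := by
  simp only [Aregion, Set.mem_ofPred_eq, lt_min_iff, max_lt_iff, gt_iff_lt]
  rcases lt_trichotomy γ N with hγN | hγN | hNγ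
  · have h2 : γ < 2 * N - 2 := by linarith
    simp only [hγ, hγN, lt_qlow_iff hγN, lt_qupp_iff h2, hγN.ne, hγN.not_gt, h2.ne, h2.not_gt,
      true_and, false_and, or_false]
  · subst γ
    have h2 : N < 2 * N - 2 := by linarith
    have hlow : (N - N) * p.2 < 2 * (p.1 - N * β + N) ↔ -(1 - β) * N < p.1 := by
      rw [sub_self, zero_mul]
      constructor <;> intro h <;> linarith
    simp only [hlow, lt_qupp_iff h2, lt_irrefl, h2.ne, h2.not_gt, true_and, false_and, or_false]
    tauto
  · rcases lt_trichotomy γ (2 * N - 2) with h2 | h2 | h2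
    · simp only [hNγ, h2, qlow_lt_iff hNγ, lt_qupp_iff h2, hNγ.ne', hNγ.not_gt, h2.ne, h2.not_gt,
        true_and, false_and, and_false, or_false, false_or, and_assoc]
    · subst γ
      have hupp : (2 * (N - 1) - (2 * N - 2)) * p.2 <
          2 * (2 * p.1 + (1 - 2 * β) * (2 * N - 2) + 2 * (N - 1)) ↔
          -(1 - β) * (2 * N - 2) < p.1 := by
        rw [show 2 * (N - 1) - (2 * N - 2) = 0 by ring, zero_mul]
        constructor <;> intro h <;> linarith
      simp only [hNγ, qlow_lt_iff hNγ, hupp, hNγ.ne', hNγ.not_gt, lt_irrefl,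
        true_and, false_and, and_false, or_false, false_or, and_assoc]
    · simp only [hNγ, h2, qlow_lt_iff hNγ, qupp_lt_iff h2, hNγ.ne', hNγ.not_gt, h2.ne', h2.not_gt,
        true_and, false_and, and_false, false_or, and_assoc]

section Monotone

variable {N α β q γ₁ γ₂ : ℝ}

lemma qlow_constraint_mono (hq : 2 * β < q) (hγ : γ₁ ≤ γ₂)
    (h : (N - γ₁) * q < 2 * (α - γ₁ * β + N)) : (N - γ₂) * q < 2 * (α - γ₂ * β + N) := by
  nlinarith [mul_nonneg (sub_nonneg.2 hγ) (sub_pos.2 hq).le]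

lemma qupp_constraint_mono (hβ : β ≤ 1) (hq : 2 * β < q) (hγ : γ₁ ≤ γ₂)
    (h : (2 * (N - 1) - γ₁) * q < 2 * (2 * α + (1 - 2 * β) * γ₁ + 2 * (N - 1))) :
    (2 * (N - 1) - γ₂) * q < 2 * (2 * α + (1 - 2 * β) * γ₂ + 2 * (N - 1)) := by
  have hslope : 0 ≤ q + 2 - 4 * β := by linarith
  nlinarith [mul_nonneg (sub_nonneg.2 hγ) hslope]

end Monotone

theorem stmt_5 (N β γ₁ γ₂ : ℝ) (hN : 3 ≤ N) (hβ : β ≤ 1)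
    (hγ₁ : 2 ≤ γ₁) (hγ : γ₁ < γ₂) :
    Aregion N β γ₁ ⊆ Aregion N β γ₂ := by
  intro p hp
  obtain ⟨hq, hlow, hupp⟩ := (mem_Aregion_iff hN hγ₁).1 hp
  have h2β : 2 * β < p.2 := (le_max_right _ _).trans_lt hq
  exact (mem_Aregion_iff hN (hγ₁.trans hγ.le)).2
    ⟨hq, qlow_constraint_mono h2β hγ.le hlow, qupp_constraint_mono hβ h2β hγ.le hupp⟩
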